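/- arXiv:2511.21008 — 2 statements merged into one kernel-verified Lean document; each statement's English description precedes it below -/
import Mathlib

section
/- Let μ and μ* be two Ising models on {-1,1}ⁿ with symmetric zero-diagonal interaction matrices J and J* and zero external fields, i.e. μ(x) ∝ exp((1/2)xᵀJx). Then the total variation distance satisfies TV(μ, μ*) ≤ n·‖J - J*‖_F. -/
/-!
Changing `J` to `J'` moves the energy `(1/2) xᵀJx` of every spin configuration by at most
`(1/2) ∑ᵢⱼ |Jᵢⱼ - J'ᵢⱼ| ≤ (n/2) ‖J - J'‖_F` (Cauchy–Schwarz). A uniform perturbation of size `s`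
of the energies changes every Gibbs probability by a factor in `[exp (-2s), exp (2s)]`, so the
total variation distance is at most `min 1 ((exp (2s) - 1)/2) ≤ 2s = n ‖J - J'‖_F`.
-/

open Matrix

/-- Spin vector associated to a Boolean configuration: entries are ±1. -/
def pmVec {n : ℕ} (σ : Fin n → Bool) : Fin n → ℝ := fun i => if σ i then 1 else -1

/-- Unnormalized Ising weight (zero external field). -/
noncomputable def isingWeight {n : ℕ} (J : Matrix (Fin n) (Fin n) ℝ)
    (σ : Fin n → Bool) : ℝ :=
  Real.exp ((1 / 2) * (pmVec σ ⬝ᵥ J.mulVec (pmVec σ)))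

/-- Ising probability mass (zero external field): `μ(x) ∝ exp((1/2) xᵀJx)`. -/
noncomputable def isingProb {n : ℕ} (J : Matrix (Fin n) (Fin n) ℝ)
    (σ : Fin n → Bool) : ℝ :=
  isingWeight J σ / (∑ τ : Fin n → Bool, isingWeight J τ)

open Finset Real

lemma sum_abs_le_sqrt_card_mul_sqrt_sum_sq {ι : Type*} [Fintype ι] (f : ι → ℝ) :
    ∑ i, |f i| ≤ √(Fintype.card ι) * √(∑ i, f i ^ 2) := by
  simpa using Real.sum_mul_le_sqrt_mul_sqrt univ (fun _ => (1 : ℝ)) (fun i => |f i|)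

lemma sum_sum_abs_le_card_mul_sqrt_sum_sum_sq {n : ℕ} (A : Matrix (Fin n) (Fin n) ℝ) :
    ∑ i, ∑ j, |A i j| ≤ n * √(∑ i, ∑ j, A i j ^ 2) := by
  have h := sum_abs_le_sqrt_card_mul_sqrt_sum_sq fun p : Fin n × Fin n => A p.1 p.2
  rwa [Fintype.sum_prod_type, Fintype.sum_prod_type, Fintype.card_prod, Fintype.card_fin,
    Nat.cast_mul, Real.sqrt_mul_self (Nat.cast_nonneg n)] at h

lemma abs_dotProduct_mulVec_le_sum_sum_abs {ι : Type*} [Fintype ι] (A : Matrix ι ι ℝ)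
    {x : ι → ℝ} (hx : ∀ i, |x i| ≤ 1) :
    |x ⬝ᵥ A *ᵥ x| ≤ ∑ i, ∑ j, |A i j| := by
  refine (abs_sum_le_sum_abs _ _).trans (sum_le_sum fun i _ => ?_)
  rw [abs_mul]
  refine (mul_le_of_le_one_left (abs_nonneg _) (hx i)).trans ?_
  refine (abs_sum_le_sum_abs _ _).trans (sum_le_sum fun j _ => ?_)
  rw [abs_mul]
  exact mul_le_of_le_one_right (abs_nonneg _) (hx j)

lemma abs_pmVec {n : ℕ} (σ : Fin n → Bool) (i : Fin n) : |pmVec σ i| = 1 := by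
  unfold pmVec; split <;> norm_num

section Gibbs

variable {ι : Type*} [Fintype ι]

noncomputable def gibbs (f : ι → ℝ) (i : ι) : ℝ := exp (f i) / ∑ j, exp (f j)

lemma gibbs_nonneg (f : ι → ℝ) (i : ι) : 0 ≤ gibbs f i := by
  unfold gibbs; positivity

lemma sum_gibbs [Nonempty ι] (f : ι → ℝ) : ∑ i, gibbs f i = 1 := by
  simp only [gibbs]
  rw [← sum_div, div_self (sum_pos (fun i _ => exp_pos (f i)) univ_nonempty).ne']

lemma gibbs_le_exp_mul_gibbs [Nonempty ι] {f g : ι → ℝ} {s : ℝ} (h : ∀ i, |f i - g i| ≤ s)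
    (i : ι) : gibbs f i ≤ exp (2 * s) * gibbs g i := by
  have hexp : ∀ j, exp (f j) ≤ exp s * exp (g j) := fun j => by
    rw [← exp_add]; exact exp_le_exp.2 (by linarith [(abs_le.1 (h j)).2])
  have hexp' : ∀ j, exp (g j) ≤ exp s * exp (f j) := fun j => by
    rw [← exp_add]; exact exp_le_exp.2 (by linarith [(abs_le.1 (h j)).1])
  have hZf : 0 < ∑ j, exp (f j) := sum_pos (fun j _ => exp_pos _) univ_nonempty
  have hZg : 0 < ∑ j, exp (g j) := sum_pos (fun j _ => exp_pos _) univ_nonempty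
  have hZ : ∑ j, exp (g j) ≤ exp s * ∑ j, exp (f j) := by
    rw [mul_sum]; exact sum_le_sum fun j _ => hexp' j
  unfold gibbs
  rw [div_le_iff₀ hZf, mul_div_assoc', div_mul_eq_mul_div, le_div_iff₀ hZg]
  calc exp (f i) * ∑ j, exp (g j) ≤ (exp s * exp (g i)) * (exp s * ∑ j, exp (f j)) :=
        mul_le_mul (hexp i) hZ hZg.le (by positivity)
    _ = _ := by rw [two_mul, exp_add]; ring

lemma sum_abs_sub_le_of_le_mul {p q : ι → ℝ} {E : ℝ} (hp : ∀ i, 0 ≤ p i)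
    (hq1 : ∑ i, q i = 1) (hpq : ∀ i, p i ≤ E * q i) (hqp : ∀ i, q i ≤ E * p i) :
    ∑ i, |p i - q i| ≤ E - 1 := by
  calc ∑ i, |p i - q i| ≤ ∑ i, (E - 1) * q i := sum_le_sum fun i _ => by
        rw [abs_sub_le_iff]
        constructor
        · linarith [hpq i]
        · nlinarith [hpq i, hqp i, hp i, mul_nonneg (hp i) (sq_nonneg (E - 1))]
    _ = E - 1 := by rw [← mul_sum, hq1, mul_one]

lemma sum_abs_sub_le_two {p q : ι → ℝ} (hp : ∀ i, 0 ≤ p i) (hq : ∀ i, 0 ≤ q i)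
    (hp1 : ∑ i, p i = 1) (hq1 : ∑ i, q i = 1) : ∑ i, |p i - q i| ≤ 2 := by
  calc ∑ i, |p i - q i| ≤ ∑ i, (p i + q i) := sum_le_sum fun i _ => by
        rw [abs_sub_le_iff]; constructor <;> linarith [hp i, hq i]
    _ = 2 := by rw [sum_add_distrib, hp1, hq1]; norm_num

lemma half_sum_abs_sub_gibbs_le [Nonempty ι] {f g : ι → ℝ} {s : ℝ}
    (h : ∀ i, |f i - g i| ≤ s) :
    (1 / 2) * ∑ i, |gibbs f i - gibbs g i| ≤ 2 * s := by
  have hs : 0 ≤ s := (abs_nonneg _).trans (h (Classical.arbitrary ι))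
  have hle_two :=
    sum_abs_sub_le_two (gibbs_nonneg f) (gibbs_nonneg g) (sum_gibbs f) (sum_gibbs g)
  have hle_exp := sum_abs_sub_le_of_le_mul (gibbs_nonneg f) (sum_gibbs g)
    (gibbs_le_exp_mul_gibbs h) (gibbs_le_exp_mul_gibbs fun i => abs_sub_comm (f i) (g i) ▸ h i)
  -- For `2 * s ≤ 1` the bound `exp (2 * s) - 1 ≤ 4 * s` applies; otherwise the trivial bound does.
  rcases le_or_gt (2 * s) 1 with hs1 | hs1
  · have hexp := abs_exp_sub_one_le (x := 2 * s) (by rwa [abs_of_nonneg (by positivity)])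
    rw [abs_of_nonneg (by linarith [add_one_le_exp (2 * s)]),
      abs_of_nonneg (by positivity)] at hexp
    linarith
  · linarith

end Gibbs

theorem tv_le_n_frobenius_general {n : ℕ} (J J' : Matrix (Fin n) (Fin n) ℝ) :
    (1 / 2) * ∑ σ : Fin n → Bool, |isingProb J σ - isingProb J' σ| ≤
      (n : ℝ) * Real.sqrt (∑ i, ∑ j, (J i j - J' i j) ^ 2) := by
  have hquad : ∀ σ : Fin n → Bool,
      |(1 / 2) * (pmVec σ ⬝ᵥ J *ᵥ pmVec σ) - (1 / 2) * (pmVec σ ⬝ᵥ J' *ᵥ pmVec σ)| ≤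
        (1 / 2) * (n * √(∑ i, ∑ j, (J i j - J' i j) ^ 2)) := fun σ => by
    rw [← mul_sub, ← dotProduct_sub, ← Matrix.sub_mulVec, abs_mul, abs_of_pos one_half_pos]
    gcongr
    exact (abs_dotProduct_mulVec_le_sum_sum_abs _ fun i => (abs_pmVec σ i).le).trans
      (sum_sum_abs_le_card_mul_sqrt_sum_sum_sq (J - J'))
  -- `isingProb J` is, by definition, `gibbs` of half the quadratic form of `J`.
  have hgibbs := half_sum_abs_sub_gibbs_le hquad
  rwa [← mul_assoc, mul_one_div_cancel two_ne_zero, one_mul] at hgibbs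

/-- The total variation distance between two zero-field Ising models is at most
`n` times the Frobenius distance between their interaction matrices. -/
theorem tv_le_n_frobenius {n : ℕ} (J J' : Matrix (Fin n) (Fin n) ℝ)
    (hs : J.IsSymm) (hs' : J'.IsSymm)
    (hd : ∀ i, J i i = 0) (hd' : ∀ i, J' i i = 0) :
    (1 / 2) * ∑ σ : Fin n → Bool, |isingProb J σ - isingProb J' σ| ≤
      (n : ℝ) * Real.sqrt (∑ i, ∑ j, (J i j - J' i j) ^ 2) :=
  tv_le_n_frobenius_general J J'
end

section
/- Suppose J₁, J₂ are symmetric n×n zero-diagonal matrices such that for every t ∈ [0,1], the Ising model P_{J_t} with J_t = tJ₁ + (1-t)J₂ satisfies the Poincaré inequality Var(f) ≤ 2ρ·∑_j E[Var(f | X_{-j})]. Then TV(P_{J₁}, P_{J₂}) ≤ ρ·‖J₁ - J₂‖_F. -/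
/-! Along `J_t = J₂ + t (J₁ - J₂)` the Ising law moves by `d/dt P_t(σ) = P_t(σ) (V(σ) - E_t V)`
with `V(σ) = ½ xᵀ(J₁ - J₂)x`, so by the mean value inequality the L¹ distance of the endpoints is
at most `sup_t E_t |V - E_t V| ≤ sup_t √(Var_t V)`. Flipping spin `j` changes `V` by `2 ((J₁ - J₂)x)_j`,
so the Poincaré inequality gives `Var_t V ≤ 2ρ ∑_j E_t ((J₁ - J₂)x)_j²`; each `((J₁ - J₂)x)_j` is
centred by spin-flip symmetry and changes by `2 (J₁ - J₂)_{ji}` when spin `i` flips, so a second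
application gives `E_t ((J₁ - J₂)x)_j² ≤ 2ρ ∑_i (J₁ - J₂)_{ji}²`. -/

open Matrix

/-- Expectation under the Ising model with interaction matrix `J`. -/
noncomputable def isingExp {n : ℕ} (J : Matrix (Fin n) (Fin n) ℝ)
    (f : (Fin n → Bool) → ℝ) : ℝ :=
  ∑ σ : Fin n → Bool, isingProb J σ * f σ

/-- Variance under the Ising model with interaction matrix `J`. -/
noncomputable def isingVar {n : ℕ} (J : Matrix (Fin n) (Fin n) ℝ)
    (f : (Fin n → Bool) → ℝ) : ℝ :=
  isingExp J (fun σ => (f σ) ^ 2) - (isingExp J f) ^ 2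

/-- Conditional expectation of `f` given all coordinates except `j`, under the
Ising model with interaction matrix `J`. -/
noncomputable def isingCondExp {n : ℕ} (J : Matrix (Fin n) (Fin n) ℝ)
    (f : (Fin n → Bool) → ℝ) (j : Fin n) (σ : Fin n → Bool) : ℝ :=
  (∑ b : Bool, isingProb J (Function.update σ j b) * f (Function.update σ j b)) /
    (∑ b : Bool, isingProb J (Function.update σ j b))

/-- Conditional variance `Var(f | X₋ⱼ)` under the Ising model with matrix `J`. -/
noncomputable def isingCondVar {n : ℕ} (J : Matrix (Fin n) (Fin n) ℝ)
    (f : (Fin n → Bool) → ℝ) (j : Fin n) (σ : Fin n → Bool) : ℝ :=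
  isingCondExp J (fun τ => (f τ) ^ 2) j σ - (isingCondExp J f j σ) ^ 2

variable {n : ℕ}

noncomputable def isingPotential (J : Matrix (Fin n) (Fin n) ℝ) (σ : Fin n → Bool) : ℝ :=
  (1 / 2) * (pmVec σ ⬝ᵥ J *ᵥ pmVec σ)

lemma isingWeight_eq_exp (J : Matrix (Fin n) (Fin n) ℝ) (σ : Fin n → Bool) :
    isingWeight J σ = Real.exp (isingPotential J σ) := rfl

lemma isingPotential_add_smul (J E : Matrix (Fin n) (Fin n) ℝ) (t : ℝ) (σ : Fin n → Bool) :
    isingPotential (J + t • E) σ = isingPotential J σ + t * isingPotential E σ := by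
  simp only [isingPotential, add_mulVec, smul_mulVec, dotProduct_add, dotProduct_smul, smul_eq_mul]
  ring

section Basic

variable (J : Matrix (Fin n) (Fin n) ℝ)

lemma isingWeight_pos (σ : Fin n → Bool) : 0 < isingWeight J σ := Real.exp_pos _

lemma sum_isingWeight_pos : 0 < ∑ τ : Fin n → Bool, isingWeight J τ :=
  Finset.sum_pos (fun τ _ => isingWeight_pos J τ) Finset.univ_nonempty

lemma isingProb_pos (σ : Fin n → Bool) : 0 < isingProb J σ :=
  div_pos (isingWeight_pos J σ) (sum_isingWeight_pos J)

lemma sum_isingProb : ∑ σ : Fin n → Bool, isingProb J σ = 1 := by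
  simp only [isingProb]
  rw [← Finset.sum_div, div_self (sum_isingWeight_pos J).ne']

lemma isingExp_const (c : ℝ) : isingExp J (fun _ => c) = c := by
  rw [isingExp, ← Finset.sum_mul, sum_isingProb, one_mul]

variable {J}

lemma isingExp_mono {f g : (Fin n → Bool) → ℝ} (h : ∀ σ, f σ ≤ g σ) :
    isingExp J f ≤ isingExp J g :=
  Finset.sum_le_sum fun σ _ => mul_le_mul_of_nonneg_left (h σ) (isingProb_pos J σ).le

lemma isingExp_nonneg {f : (Fin n → Bool) → ℝ} (h : ∀ σ, 0 ≤ f σ) : 0 ≤ isingExp J f :=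
  Finset.sum_nonneg fun σ _ => mul_nonneg (isingProb_pos J σ).le (h σ)

lemma isingVar_eq_isingExp_sub_sq (f : (Fin n → Bool) → ℝ) :
    isingVar J f = isingExp J (fun σ => (f σ - isingExp J f) ^ 2) := by
  have expand : ∀ σ, isingProb J σ * (f σ - isingExp J f) ^ 2 =
      isingProb J σ * f σ ^ 2 - 2 * isingExp J f * (isingProb J σ * f σ)
        + isingExp J f ^ 2 * isingProb J σ := fun σ => by ring
  rw [isingVar]
  nth_rw 3 [isingExp]
  rw [Finset.sum_congr rfl fun σ _ => expand σ, Finset.sum_add_distrib,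
    Finset.sum_sub_distrib, ← Finset.mul_sum, ← Finset.mul_sum, sum_isingProb, ← isingExp, ← isingExp]
  ring

lemma sq_isingExp_abs_le (g : (Fin n → Bool) → ℝ) :
    isingExp J (fun σ => |g σ|) ^ 2 ≤ isingExp J (fun σ => g σ ^ 2) := by
  have h := Finset.sum_sq_le_sum_mul_sum_of_sq_le_mul Finset.univ
    (r := fun σ => isingProb J σ * |g σ|) (f := isingProb J)
    (g := fun σ => isingProb J σ * g σ ^ 2) (fun σ _ => (isingProb_pos J σ).le)
    (fun σ _ => mul_nonneg (isingProb_pos J σ).le (sq_nonneg _))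
    (fun σ _ => le_of_eq (by rw [mul_pow, sq_abs]; ring))
  rwa [sum_isingProb, one_mul] at h

lemma isingExp_abs_sub_le_sqrt_isingVar (f : (Fin n → Bool) → ℝ) :
    isingExp J (fun σ => |f σ - isingExp J f|) ≤ Real.sqrt (isingVar J f) := by
  rw [isingVar_eq_isingExp_sub_sq]
  exact Real.le_sqrt_of_sq_le (sq_isingExp_abs_le _)

end Basic

section ConditionalVariance

variable (J : Matrix (Fin n) (Fin n) ℝ) (f : (Fin n → Bool) → ℝ) (j : Fin n) (σ : Fin n → Bool)

lemma isingCondVar_eq :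
    isingCondVar J f j σ =
      isingProb J (Function.update σ j true) * isingProb J (Function.update σ j false)
        * (f (Function.update σ j true) - f (Function.update σ j false)) ^ 2
        / (isingProb J (Function.update σ j true) + isingProb J (Function.update σ j false)) ^ 2 := by
  have hp := isingProb_pos J (Function.update σ j true)
  have hq := isingProb_pos J (Function.update σ j false)
  simp only [isingCondVar, isingCondExp, Fintype.sum_bool]
  field_simp
  ring

lemma isingCondVar_nonneg : 0 ≤ isingCondVar J f j σ := by
  have hp := isingProb_pos J (Function.update σ j true)
  have hq := isingProb_pos J (Function.update σ j false)
  rw [isingCondVar_eq]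
  positivity

lemma isingCondVar_le :
    isingCondVar J f j σ ≤
      (f (Function.update σ j true) - f (Function.update σ j false)) ^ 2 / 4 := by
  have hp := isingProb_pos J (Function.update σ j true)
  have hq := isingProb_pos J (Function.update σ j false)
  rw [isingCondVar_eq, div_le_div_iff₀ (by positivity) (by norm_num)]
  -- `4pq ≤ (p + q)²`
  nlinarith [mul_nonneg (sq_nonneg (isingProb J (Function.update σ j true)
    - isingProb J (Function.update σ j false)))
    (sq_nonneg (f (Function.update σ j true) - f (Function.update σ j false)))]

end ConditionalVariance

lemma pmVec_not (σ : Fin n → Bool) : pmVec (fun i => !σ i) = -pmVec σ := by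
  funext i
  cases h : σ i <;> simp [pmVec, h]

lemma isingProb_not (J : Matrix (Fin n) (Fin n) ℝ) (σ : Fin n → Bool) :
    isingProb J (fun i => !σ i) = isingProb J σ := by
  simp [isingProb, isingWeight, pmVec_not, mulVec_neg]

lemma isingExp_eq_zero_of_odd (J : Matrix (Fin n) (Fin n) ℝ) {f : (Fin n → Bool) → ℝ}
    (hf : ∀ σ, f (fun i => !σ i) = -f σ) : isingExp J f = 0 := by
  have hflip : Function.Involutive (fun σ : Fin n → Bool => fun i => !σ i) :=
    fun σ => funext fun i => Bool.not_not (σ i)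
  have h : isingExp J f = -isingExp J f := calc
    isingExp J f = ∑ σ : Fin n → Bool, isingProb J (fun i => !σ i) * f (fun i => !σ i) :=
      (Equiv.sum_comp hflip.toPerm (fun σ => isingProb J σ * f σ)).symm
    _ = -isingExp J f := by
      simp only [isingExp, isingProb_not, hf, mul_neg, Finset.sum_neg_distrib]
  linarith

lemma pmVec_update (σ : Fin n → Bool) (j : Fin n) (b : Bool) :
    pmVec (Function.update σ j b) = Function.update (pmVec σ) j (if b then 1 else -1) := by
  funext k
  by_cases h : k = j <;> simp [pmVec, h]

lemma mulVec_pmVec_update_sub (E : Matrix (Fin n) (Fin n) ℝ) (σ : Fin n → Bool) (i j : Fin n) :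
    (E *ᵥ pmVec (Function.update σ i true)) j - (E *ᵥ pmVec (Function.update σ i false)) j
      = 2 * E j i := by
  simp only [mulVec, dotProduct, pmVec_update, ← Finset.sum_sub_distrib]
  rw [Finset.sum_eq_single i (fun k _ hk => by simp [hk])
    (fun h => absurd (Finset.mem_univ i) h)]
  simp only [↓reduceIte, Function.update_self, mul_one, Bool.false_eq_true, mul_neg,
    sub_neg_eq_add]
  ring

lemma isingPotential_update_sub {E : Matrix (Fin n) (Fin n) ℝ} (hE : E.IsSymm)
    (hEd : ∀ i, E i i = 0) (σ : Fin n → Bool) (j : Fin n) :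
    isingPotential E (Function.update σ j true) - isingPotential E (Function.update σ j false)
      = 2 * (E *ᵥ pmVec σ) j := by
  set x := pmVec σ
  set u := pmVec (Function.update σ j true)
  set v := pmVec (Function.update σ j false)
  have hsub : u - v = Pi.single j 2 := by
    funext k
    by_cases h : k = j
    · subst h; norm_num [u, v, pmVec_update]
    · simp [u, v, pmVec_update, h]
  have hadd : u + v = (2 : ℝ) • x - Pi.single j (2 * x j) := by
    funext k
    by_cases h : k = j <;> simp [u, v, x, pmVec_update, h, two_mul]
  have hpolar : u ⬝ᵥ E *ᵥ u - v ⬝ᵥ E *ᵥ v = (u - v) ⬝ᵥ E *ᵥ (u + v) := by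
    have hsymm : v ⬝ᵥ E *ᵥ u = u ⬝ᵥ E *ᵥ v := by
      rw [dotProduct_mulVec, ← mulVec_transpose, hE.eq, dotProduct_comm]
    rw [mulVec_add, dotProduct_add, sub_dotProduct, sub_dotProduct, hsymm]
    ring
  have hdiff : u ⬝ᵥ E *ᵥ u - v ⬝ᵥ E *ᵥ v = 4 * (E *ᵥ x) j := by
    rw [hpolar, hsub, single_dotProduct, hadd, mulVec_sub, mulVec_smul, mulVec_single]
    simp [hEd j]
    ring
  simp only [isingPotential]
  linarith

lemma isingCondVar_mulVec_pmVec_le (J E : Matrix (Fin n) (Fin n) ℝ) (σ : Fin n → Bool)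
    (i j : Fin n) : isingCondVar J (fun τ => (E *ᵥ pmVec τ) j) i σ ≤ E j i ^ 2 :=
  (isingCondVar_le J _ i σ).trans_eq (by rw [mulVec_pmVec_update_sub]; ring)

lemma isingCondVar_isingPotential_le (J : Matrix (Fin n) (Fin n) ℝ)
    {E : Matrix (Fin n) (Fin n) ℝ} (hE : E.IsSymm) (hEd : ∀ i, E i i = 0)
    (σ : Fin n → Bool) (j : Fin n) :
    isingCondVar J (isingPotential E) j σ ≤ (E *ᵥ pmVec σ) j ^ 2 :=
  (isingCondVar_le J _ j σ).trans_eq (by rw [isingPotential_update_sub hE hEd]; ring)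

def IsingPoincare (J : Matrix (Fin n) (Fin n) ℝ) (ρ : ℝ) : Prop :=
  ∀ f : (Fin n → Bool) → ℝ,
    isingVar J f ≤ 2 * ρ * ∑ j, isingExp J (fun σ => isingCondVar J f j σ)

namespace IsingPoincare

variable {J : Matrix (Fin n) (Fin n) ℝ} {ρ : ℝ}

lemma nonneg (h : IsingPoincare J ρ) (i : Fin n) : 0 ≤ ρ := by
  have hmean : isingExp J (fun σ => pmVec σ i) = 0 :=
    isingExp_eq_zero_of_odd J fun σ => congrFun (pmVec_not σ) i
  have hsq : isingExp J (fun σ => pmVec σ i ^ 2) = 1 := by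
    have hone : (fun σ : Fin n → Bool => pmVec σ i ^ 2) = fun _ => 1 :=
      funext fun σ => by unfold pmVec; split_ifs <;> norm_num
    rw [hone, isingExp_const]
  have hvar := h (fun σ => pmVec σ i)
  rw [isingVar, hsq, hmean] at hvar
  have hcond : 0 ≤ ∑ j, isingExp J (fun σ => isingCondVar J (fun τ => pmVec τ i) j σ) :=
    Finset.sum_nonneg fun j _ => isingExp_nonneg fun σ => isingCondVar_nonneg J _ j σ
  nlinarith

lemma isingVar_le_of_isingCondVar_le (h : IsingPoincare J ρ) (hρ : 0 ≤ ρ)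
    {f : (Fin n → Bool) → ℝ} {g : Fin n → (Fin n → Bool) → ℝ}
    (hg : ∀ j σ, isingCondVar J f j σ ≤ g j σ) :
    isingVar J f ≤ 2 * ρ * ∑ j, isingExp J (g j) := by
  refine (h f).trans ?_
  gcongr with j
  exact isingExp_mono (hg j)

lemma isingExp_mulVec_pmVec_sq_le (h : IsingPoincare J ρ) (hρ : 0 ≤ ρ)
    (E : Matrix (Fin n) (Fin n) ℝ) (j : Fin n) :
    isingExp J (fun σ => (E *ᵥ pmVec σ) j ^ 2) ≤ 2 * ρ * ∑ i, E j i ^ 2 := by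
  have hmean : isingExp J (fun σ => (E *ᵥ pmVec σ) j) = 0 :=
    isingExp_eq_zero_of_odd J fun σ => by simp [pmVec_not, mulVec_neg]
  have hvar := h.isingVar_le_of_isingCondVar_le hρ
    (g := fun i _ => E j i ^ 2) fun i σ => isingCondVar_mulVec_pmVec_le J E σ i j
  simpa [isingVar, hmean, isingExp_const] using hvar

lemma isingVar_isingPotential_le (h : IsingPoincare J ρ) (hρ : 0 ≤ ρ)
    {E : Matrix (Fin n) (Fin n) ℝ} (hE : E.IsSymm) (hEd : ∀ i, E i i = 0) :
    isingVar J (isingPotential E) ≤ (2 * ρ) ^ 2 * ∑ i, ∑ j, E i j ^ 2 := calc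
  isingVar J (isingPotential E) ≤ 2 * ρ * ∑ j, isingExp J (fun σ => (E *ᵥ pmVec σ) j ^ 2) :=
    h.isingVar_le_of_isingCondVar_le hρ fun j σ => isingCondVar_isingPotential_le J hE hEd σ j
  _ ≤ 2 * ρ * ∑ j, 2 * ρ * ∑ i, E j i ^ 2 := by
    gcongr with j
    exact h.isingExp_mulVec_pmVec_sq_le hρ E j
  _ = (2 * ρ) ^ 2 * ∑ i, ∑ j, E i j ^ 2 := by
    rw [← Finset.mul_sum]
    ring

lemma sqrt_isingVar_isingPotential_le (h : IsingPoincare J ρ) (hρ : 0 ≤ ρ)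
    {E : Matrix (Fin n) (Fin n) ℝ} (hE : E.IsSymm) (hEd : ∀ i, E i i = 0) :
    Real.sqrt (isingVar J (isingPotential E)) ≤ 2 * ρ * Real.sqrt (∑ i, ∑ j, E i j ^ 2) := by
  calc Real.sqrt (isingVar J (isingPotential E))
      ≤ Real.sqrt ((2 * ρ) ^ 2 * ∑ i, ∑ j, E i j ^ 2) :=
        Real.sqrt_le_sqrt (h.isingVar_isingPotential_le hρ hE hEd)
    _ = 2 * ρ * Real.sqrt (∑ i, ∑ j, E i j ^ 2) := by
        rw [Real.sqrt_mul (by positivity), Real.sqrt_sq (by positivity)]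

end IsingPoincare

lemma abs_sum_mul_isingProb_mul_sub_le (J : Matrix (Fin n) (Fin n) ℝ) (f : (Fin n → Bool) → ℝ)
    {s : (Fin n → Bool) → ℝ} (hs : ∀ σ, |s σ| ≤ 1) :
    |∑ σ, s σ * (isingProb J σ * (f σ - isingExp J f))| ≤ Real.sqrt (isingVar J f) := calc
  _ ≤ ∑ σ, |s σ * (isingProb J σ * (f σ - isingExp J f))| := Finset.abs_sum_le_sum_abs _ _
  _ ≤ isingExp J (fun σ => |f σ - isingExp J f|) := Finset.sum_le_sum fun σ _ => by
    rw [abs_mul, abs_mul, abs_of_pos (isingProb_pos J σ)]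
    exact mul_le_of_le_one_left (mul_nonneg (isingProb_pos J σ).le (abs_nonneg _)) (hs σ)
  _ ≤ Real.sqrt (isingVar J f) := isingExp_abs_sub_le_sqrt_isingVar f

section Interpolation

variable (J E : Matrix (Fin n) (Fin n) ℝ)

lemma hasDerivAt_isingWeight_add_smul (σ : Fin n → Bool) (t : ℝ) :
    HasDerivAt (fun s => isingWeight (J + s • E) σ)
      (isingWeight (J + t • E) σ * isingPotential E σ) t := by
  simp only [isingWeight_eq_exp, isingPotential_add_smul]
  simpa using (((hasDerivAt_id t).mul_const (isingPotential E σ)).const_add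
    (isingPotential J σ)).exp

lemma hasDerivAt_isingProb_add_smul (σ : Fin n → Bool) (t : ℝ) :
    HasDerivAt (fun s => isingProb (J + s • E) σ)
      (isingProb (J + t • E) σ *
        (isingPotential E σ - isingExp (J + t • E) (isingPotential E))) t := by
  have hZ := HasDerivAt.fun_sum (u := Finset.univ)
    fun τ _ => hasDerivAt_isingWeight_add_smul J E τ t
  refine ((hasDerivAt_isingWeight_add_smul J E σ t).fun_div hZ
    (sum_isingWeight_pos _).ne').congr_deriv ?_
  have hZpos := sum_isingWeight_pos (J + t • E)
  simp only [isingExp, isingProb, div_mul_eq_mul_div, ← Finset.sum_div]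
  field_simp

lemma sum_abs_isingProb_add_sub_le {M : ℝ}
    (hvar : ∀ t ∈ Set.Icc (0 : ℝ) 1, Real.sqrt (isingVar (J + t • E) (isingPotential E)) ≤ M) :
    ∑ σ, |isingProb (J + E) σ - isingProb J σ| ≤ M := by
  -- mean value inequality for `t ↦ ∑ σ, s σ * P_{J+tE}(σ)`, `s` the sign pattern of `P_{J+E} - P_J`
  set s : (Fin n → Bool) → ℝ := fun σ => SignType.sign (isingProb (J + E) σ - isingProb J σ)
  have hs : ∀ σ, |s σ| ≤ 1 := fun σ => by
    simp only [s]
    cases SignType.sign (isingProb (J + E) σ - isingProb J σ) <;> simp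
  have hderiv : ∀ t, HasDerivAt (fun t => ∑ σ, s σ * isingProb (J + t • E) σ)
      (∑ σ, s σ * (isingProb (J + t • E) σ *
        (isingPotential E σ - isingExp (J + t • E) (isingPotential E)))) t :=
    fun t => HasDerivAt.fun_sum fun σ _ => (hasDerivAt_isingProb_add_smul J E σ t).const_mul (s σ)
  have hmvt := norm_image_sub_le_of_norm_deriv_le_segment_01'
    (fun t _ => (hderiv t).hasDerivWithinAt) fun t ht =>
      (abs_sum_mul_isingProb_mul_sub_le _ _ hs).trans (hvar t (Set.Ico_subset_Icc_self ht))
  simp only [s, one_smul, zero_smul, add_zero, ← Finset.sum_sub_distrib, ← mul_sub, sign_mul_self,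
    Real.norm_eq_abs] at hmvt
  rwa [abs_of_nonneg (by positivity)] at hmvt

end Interpolation

/-- If every Ising model on the segment between `J₁` and `J₂` satisfies the Poincaré
inequality with constant `2ρ`, then `TV(P_{J₁}, P_{J₂}) ≤ ρ ‖J₁ - J₂‖_F`. -/
theorem tv_le_rho_frobenius_of_poincare {n : ℕ} (J₁ J₂ : Matrix (Fin n) (Fin n) ℝ)
    (h₁ : J₁.IsSymm) (h₂ : J₂.IsSymm)
    (hd₁ : ∀ i, J₁ i i = 0) (hd₂ : ∀ i, J₂ i i = 0) (ρ : ℝ)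
    (hpoincare : ∀ t ∈ Set.Icc (0 : ℝ) 1, ∀ f : (Fin n → Bool) → ℝ,
      isingVar (t • J₁ + (1 - t) • J₂) f ≤
        2 * ρ * ∑ j, isingExp (t • J₁ + (1 - t) • J₂)
          (fun σ => isingCondVar (t • J₁ + (1 - t) • J₂) f j σ)) :
    (1 / 2) * ∑ σ : Fin n → Bool, |isingProb J₁ σ - isingProb J₂ σ| ≤
      ρ * Real.sqrt (∑ i, ∑ j, (J₁ i j - J₂ i j) ^ 2) := by
  obtain _ | ⟨⟨i⟩⟩ := isEmpty_or_nonempty (Fin n)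
  · obtain rfl : J₁ = J₂ := Matrix.ext fun i => isEmptyElim i
    simp
  have hρ : 0 ≤ ρ := IsingPoincare.nonneg (hpoincare 0 ⟨le_rfl, zero_le_one⟩) i
  have hE : (J₁ - J₂).IsSymm := h₁.sub h₂
  have hEd : ∀ i, (J₁ - J₂) i i = 0 := fun i => by simp [hd₁, hd₂]
  have hsegment : ∀ t ∈ Set.Icc (0 : ℝ) 1, IsingPoincare (J₂ + t • (J₁ - J₂)) ρ := by
    intro t ht
    have hJt : t • J₁ + (1 - t) • J₂ = J₂ + t • (J₁ - J₂) := by module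
    exact hJt ▸ hpoincare t ht
  have hL1 := sum_abs_isingProb_add_sub_le J₂ (J₁ - J₂) fun t ht =>
    (hsegment t ht).sqrt_isingVar_isingPotential_le hρ hE hEd
  rw [add_sub_cancel] at hL1
  simp only [Matrix.sub_apply] at hL1
  linarith
end
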